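/- arXiv:2506.12599 — 2 statements merged into one kernel-verified Lean document; each statement's English description precedes it below -/
import Mathlib

section
/- Let K be a natural number, let α, β : Fin K → ℂ with all α_k ≠ 0, and suppose for each k either β_k = α_k or β_k = 1/conj(α_k). Let X₁(z) = c₁·Π_{k}(z − α_k) and X₂(z) = c₂·Π_{k}(z − β_k) with c₁, c₂ ≠ 0, and let x₁, x₂ ∈ ℂ^{K+1} be their coefficient vectors. If the coefficient vectors have equal Euclidean norms, ‖x₁‖₂ = ‖x₂‖₂, then |X₁(e^{iθ})| = |X₂(e^{iθ})| for all real θ. In particular, the evaluation |X(e^{-iθ})|² on the unit circle is the same for any transmitted BMOCZ coefficient sequence normalized to a fixed norm. -/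
/-!
On the unit circle `conj z = z⁻¹`, so `‖z - (conj a)⁻¹‖ = ‖z - a‖ / ‖a‖`: flipping a zero rescales
`‖X z‖` on the circle by a constant, and `‖X₂ z‖ = s * ‖X₁ z‖` there for some `s ≥ 0`.
Conversely the circle values determine the coefficient norm: `‖x‖₂ ^ 2` is the coefficient of
`z ^ K` in `X z * z ^ K * conj (X (conj z)⁻¹)`, a polynomial equal to `z ^ K * ‖X z‖ ^ 2` on the
(infinite) circle. Hence `‖x₂‖₂ ^ 2 = s ^ 2 * ‖x₁‖₂ ^ 2`, and equal norms force `s = 1`.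
-/

open Polynomial Finset ComplexConjugate

lemma Complex.infinite_sphere_zero_one : (Metric.sphere (0 : ℂ) 1).Infinite := by
  have him (θ : ℝ) : ((θ : ℂ) * Complex.I).im = θ := by simp
  have hinj : Set.InjOn (fun θ : ℝ => Complex.exp (θ * Complex.I)) (Set.Ioo 0 Real.pi) := by
    intro x hx y hy h
    have := Complex.exp_inj_of_neg_pi_lt_of_le_pi (by rw [him]; linarith [hx.1, Real.pi_pos])
      (by rw [him]; exact hx.2.le) (by rw [him]; linarith [hy.1, Real.pi_pos])
      (by rw [him]; exact hy.2.le) h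
    simpa only [him] using congrArg Complex.im this
  refine ((Set.Ioo_infinite Real.pi_pos).image hinj).mono ?_
  rintro _ ⟨θ, -, rfl⟩
  simp [Complex.norm_exp_ofReal_mul_I]

lemma Complex.norm_sub_inv_conj {a z : ℂ} (ha : a ≠ 0) (hz : ‖z‖ = 1) :
    ‖z - (conj a)⁻¹‖ = ‖z - a‖ / ‖a‖ := by
  have ha' : conj a ≠ 0 := (_root_.map_ne_zero _).mpr ha
  have hzc : z * conj z = 1 := by rw [Complex.mul_conj', hz]; simp
  have hflip : z - (conj a)⁻¹ = z * conj (a - z) / conj a := by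
    field_simp
    rw [map_sub, mul_sub, hzc]
  rw [hflip, norm_div, norm_mul, hz, one_mul, Complex.norm_conj, Complex.norm_conj,
    norm_sub_rev]

lemma Complex.exists_norm_sub_eq_mul_norm_sub {a b : ℂ} (hb : b = a ∨ b = 1 / conj a) :
    ∃ s : ℝ, 0 ≤ s ∧ ∀ z : ℂ, ‖z‖ = 1 → ‖z - b‖ = s * ‖z - a‖ := by
  rcases hb with rfl | rfl
  · exact ⟨1, zero_le_one, fun z _ => (one_mul _).symm⟩
  rcases eq_or_ne a 0 with rfl | ha
  · exact ⟨1, zero_le_one, fun z _ => by simp⟩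
  · exact ⟨‖a‖⁻¹, by positivity, fun z hz => by
      rw [one_div, norm_sub_inv_conj ha hz, div_eq_inv_mul]⟩

namespace Polynomial

lemma exists_norm_eval_prod_eq_mul {ι : Type*} [Fintype ι] {α β : ι → ℂ}
    (h : ∀ k, β k = α k ∨ β k = 1 / conj (α k)) :
    ∃ s : ℝ, 0 ≤ s ∧ ∀ z : ℂ, ‖z‖ = 1 →
      ‖(∏ k, (X - C (β k))).eval z‖ = s * ‖(∏ k, (X - C (α k))).eval z‖ := by
  choose s hs0 hs using fun k => Complex.exists_norm_sub_eq_mul_norm_sub (h k)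
  refine ⟨∏ k, s k, prod_nonneg fun k _ => hs0 k, fun z hz => ?_⟩
  simp only [eval_prod, eval_sub, eval_X, eval_C, norm_prod, hs _ z hz, prod_mul_distrib]

/-- `autocorr N f` is `z ↦ f z * z ^ N * conj (f (conj z)⁻¹)`; its coefficient of `X ^ (N + j)`
is the autocorrelation at lag `j` of the coefficient sequence of `f`. -/
noncomputable def autocorr (N : ℕ) (f : ℂ[X]) : ℂ[X] :=
  f * reflect N (f.map (starRingEnd ℂ))

lemma coeff_autocorr_self (N : ℕ) (f : ℂ[X]) :
    (autocorr N f).coeff N = ((∑ i ∈ range (N + 1), ‖f.coeff i‖ ^ 2 : ℝ) : ℂ) := by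
  rw [autocorr, coeff_mul, Nat.sum_antidiagonal_eq_sum_range_succ_mk]
  push_cast
  refine sum_congr rfl fun i hi => ?_
  rw [coeff_reflect, revAt_le (Nat.sub_le _ _), Nat.sub_sub_self (mem_range_succ_iff.mp hi),
    coeff_map, Complex.mul_conj']

lemma eval_autocorr {N : ℕ} {f : ℂ[X]} (hf : f.natDegree ≤ N) {z : ℂ} (hz : ‖z‖ = 1) :
    (autocorr N f).eval z = z ^ N * (‖f.eval z‖ ^ 2 : ℝ) := by
  have hzc : z * conj z = 1 := by rw [Complex.mul_conj', hz]; simp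
  let : Invertible (conj z) := ⟨z, hzc, by rwa [mul_comm]⟩
  have hrefl : eval z (reflect N (f.map (starRingEnd ℂ))) * conj z ^ N = conj (f.eval z) := by
    rw [← eval₂_at_apply, ← eval_map, ← eval₂_id]
    exact eval₂_reflect_mul_pow (RingHom.id ℂ) (conj z) N _ (by rwa [natDegree_map])
  have hzcN : z ^ N * conj z ^ N = 1 := by rw [← mul_pow, hzc, one_pow]
  rw [autocorr, eval_mul]
  push_cast
  rw [← Complex.mul_conj']
  linear_combination (f.eval z * z ^ N) * hrefl -
    f.eval z * eval z (reflect N (f.map (starRingEnd ℂ))) * hzcN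

lemma sum_norm_sq_coeff_eq_of_norm_eval_eq_mul {N : ℕ} {p q : ℂ[X]} (hp : p.natDegree ≤ N)
    (hq : q.natDegree ≤ N) {s : ℝ} (h : ∀ z : ℂ, ‖z‖ = 1 → ‖q.eval z‖ = s * ‖p.eval z‖) :
    ∑ i ∈ range (N + 1), ‖q.coeff i‖ ^ 2 = s ^ 2 * ∑ i ∈ range (N + 1), ‖p.coeff i‖ ^ 2 := by
  have hautocorr : autocorr N q = C ((s ^ 2 : ℝ) : ℂ) * autocorr N p := by
    refine eq_of_infinite_eval_eq _ _ (Complex.infinite_sphere_zero_one.mono fun z hz => ?_)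
    rw [mem_sphere_zero_iff_norm] at hz
    simp only [Set.mem_ofPred_eq, eval_mul, eval_C, eval_autocorr hq hz, eval_autocorr hp hz,
      h z hz]
    push_cast
    ring
  have hcoeff := congrArg (coeff · N) hautocorr
  simp only [coeff_C_mul, coeff_autocorr_self] at hcoeff
  exact_mod_cast hcoeff

lemma sum_norm_sq_coeff_pos {R : Type*} [NormedRing R] {N : ℕ} {p : R[X]} (hp0 : p ≠ 0)
    (hp : p.natDegree ≤ N) : 0 < ∑ i ∈ range (N + 1), ‖p.coeff i‖ ^ 2 :=
  (pow_pos (norm_pos_iff.mpr (leadingCoeff_ne_zero.mpr hp0)) 2).trans_le <|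
    single_le_sum (f := fun i => ‖p.coeff i‖ ^ 2) (fun _ _ => by positivity)
      (mem_range_succ_iff.mpr hp)

lemma norm_eval_eq_of_norm_eval_eq_mul {N : ℕ} {p q : ℂ[X]} (hp0 : p ≠ 0)
    (hp : p.natDegree ≤ N) (hq : q.natDegree ≤ N) {s : ℝ} (hs : 0 ≤ s)
    (h : ∀ z : ℂ, ‖z‖ = 1 → ‖q.eval z‖ = s * ‖p.eval z‖)
    (hsum : ∑ i ∈ range (N + 1), ‖q.coeff i‖ ^ 2 = ∑ i ∈ range (N + 1), ‖p.coeff i‖ ^ 2)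
    {z : ℂ} (hz : ‖z‖ = 1) : ‖q.eval z‖ = ‖p.eval z‖ := by
  have hs1 : s ^ 2 = 1 := by
    have := sum_norm_sq_coeff_eq_of_norm_eval_eq_mul hp hq h
    rw [hsum] at this
    exact (mul_eq_right₀ (sum_norm_sq_coeff_pos hp0 hp).ne').mp this.symm
  rw [h z hz, (pow_eq_one_iff_of_nonneg hs two_ne_zero).mp hs1, one_mul]

lemma natDegree_C_mul_prod_X_sub_C_le {R ι : Type*} [CommRing R] [Nontrivial R] [Fintype ι]
    (c : R) (γ : ι → R) :
    (C c * ∏ k, (X - C (γ k))).natDegree ≤ Fintype.card ι :=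
  (natDegree_C_mul_le _ _).trans (natDegree_finsetProd_X_sub_C_eq_card _ _).le

end Polynomial

theorem abs_on_unit_circle_eq_of_flips_of_norm_eq_general
    (K : ℕ) (α β : Fin K → ℂ)
    (hβ : ∀ k, β k = α k ∨ β k = 1 / (starRingEnd ℂ) (α k))
    (c₁ c₂ : ℂ) (hc₁ : c₁ ≠ 0)
    (hnorm :
      Real.sqrt (∑ i : Fin (K + 1),
          ‖(Polynomial.C c₁ *
            ∏ k : Fin K, (Polynomial.X - Polynomial.C (α k))).coeff i‖ ^ 2)
        = Real.sqrt (∑ i : Fin (K + 1),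
          ‖(Polynomial.C c₂ *
            ∏ k : Fin K, (Polynomial.X - Polynomial.C (β k))).coeff i‖ ^ 2)) :
    ∀ θ : ℝ,
      ‖(Polynomial.C c₁ *
          ∏ k : Fin K, (Polynomial.X - Polynomial.C (α k))).eval
            (Complex.exp (Complex.I * (θ : ℂ)))‖
        = ‖(Polynomial.C c₂ *
          ∏ k : Fin K, (Polynomial.X - Polynomial.C (β k))).eval
            (Complex.exp (Complex.I * (θ : ℂ)))‖ := by
  intro θ
  set P₁ := C c₁ * ∏ k, (X - C (α k))
  set P₂ := C c₂ * ∏ k, (X - C (β k))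
  have hdeg₁ : P₁.natDegree ≤ K := by simpa using natDegree_C_mul_prod_X_sub_C_le c₁ α
  have hdeg₂ : P₂.natDegree ≤ K := by simpa using natDegree_C_mul_prod_X_sub_C_le c₂ β
  have hP₁ : P₁ ≠ 0 := mul_ne_zero (C_ne_zero.mpr hc₁) (monic_prod_X_sub_C _ _).ne_zero
  obtain ⟨s, hs0, hs⟩ := exists_norm_eval_prod_eq_mul hβ
  have hscale : ∀ z : ℂ, ‖z‖ = 1 → ‖P₂.eval z‖ = ‖c₂‖ * s / ‖c₁‖ * ‖P₁.eval z‖ := by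
    intro z hz
    simp only [P₁, P₂, eval_mul, eval_C, norm_mul, hs z hz]
    field_simp [norm_ne_zero_iff.mpr hc₁]
  have hsum :
      ∑ i ∈ range (K + 1), ‖P₂.coeff i‖ ^ 2 = ∑ i ∈ range (K + 1), ‖P₁.coeff i‖ ^ 2 := by
    rw [← Fin.sum_univ_eq_sum_range (fun i => ‖P₁.coeff i‖ ^ 2),
      ← Fin.sum_univ_eq_sum_range (fun i => ‖P₂.coeff i‖ ^ 2)]
    exact ((Real.sqrt_inj (by positivity) (by positivity)).mp hnorm).symm
  refine (norm_eval_eq_of_norm_eval_eq_mul hP₁ hdeg₁ hdeg₂ (by positivity) hscale hsum ?_).symm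
  rw [mul_comm, Complex.norm_exp_ofReal_mul_I]

/-- If two BMOCZ polynomials (zero tuples related by conjugate-reciprocal flips) have
coefficient vectors of equal Euclidean norm, then their magnitudes agree everywhere on
the unit circle. -/
theorem abs_on_unit_circle_eq_of_flips_of_norm_eq
    (K : ℕ) (α β : Fin K → ℂ) (hα : ∀ k, α k ≠ 0)
    (hβ : ∀ k, β k = α k ∨ β k = 1 / (starRingEnd ℂ) (α k))
    (c₁ c₂ : ℂ) (hc₁ : c₁ ≠ 0) (hc₂ : c₂ ≠ 0)
    (hnorm :
      Real.sqrt (∑ i : Fin (K + 1),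
          ‖(Polynomial.C c₁ *
            ∏ k : Fin K, (Polynomial.X - Polynomial.C (α k))).coeff i‖ ^ 2)
        = Real.sqrt (∑ i : Fin (K + 1),
          ‖(Polynomial.C c₂ *
            ∏ k : Fin K, (Polynomial.X - Polynomial.C (β k))).coeff i‖ ^ 2)) :
    ∀ θ : ℝ,
      ‖(Polynomial.C c₁ *
          ∏ k : Fin K, (Polynomial.X - Polynomial.C (α k))).eval
            (Complex.exp (Complex.I * (θ : ℂ)))‖
        = ‖(Polynomial.C c₂ *
          ∏ k : Fin K, (Polynomial.X - Polynomial.C (β k))).eval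
            (Complex.exp (Complex.I * (θ : ℂ)))‖ :=
  abs_on_unit_circle_eq_of_flips_of_norm_eq_general K α β hβ c₁ c₂ hc₁ hnorm
end

section
/- Let K ≥ 1, ζ ∈ [0, 2π), r > 0, and let m : Fin K → {r, 1/r} be arbitrary (a choice of radius for each zero). Define the SBMOCZ polynomial X(z) = c · Π_{k=0}^{K-1}(z − m_k e^{iφ_k}) with φ_k = (2π − ζ)k/K + (2π + ζ(K−1))/(2K) and c ≠ 0. Then for all real θ, |X(e^{-iθ})|² = |X(e^{iθ})|². -/
/-!
On the unit circle `|e^{it} - a e^{is}|² = 1 + a² - 2a cos (t - s)`, and for `a ∈ {r, r⁻¹}` this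
equals `a (r + r⁻¹ - 2 cos (t - s))`. Hence `|X(e^{it})|²` is `|c|² ∏ mₖ` times a product that no
longer depends on the information bits. The SBMOCZ angles satisfy `φₖ + φ_{K-1-k} = 2π`, so
reindexing by `k ↦ K - 1 - k` turns the product at `-θ` into the product at `θ`.
-/

open Real

lemma norm_exp_mul_I_sub_sq (t s a : ℝ) :
    ‖Complex.exp (Complex.I * t) - a * Complex.exp (Complex.I * s)‖ ^ 2
      = 1 + a ^ 2 - 2 * a * cos (t - s) := by
  rw [Complex.sq_norm, mul_comm Complex.I, mul_comm Complex.I, Complex.exp_mul_I,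
    Complex.exp_mul_I, Complex.normSq_apply]
  simp only [Complex.sub_re, Complex.sub_im, Complex.add_re, Complex.add_im, Complex.mul_re,
    Complex.mul_im, Complex.ofReal_re, Complex.ofReal_im, Complex.I_re, Complex.I_im,
    Complex.cos_ofReal_re, Complex.sin_ofReal_re, Complex.cos_ofReal_im, Complex.sin_ofReal_im,
    cos_sub]
  nlinarith [sin_sq_add_cos_sq t, sin_sq_add_cos_sq s]

lemma one_add_sq_sub_two_mul_cos_of_eq_or_eq_inv {a r : ℝ} (hr : r ≠ 0) (ha : a = r ∨ a = r⁻¹)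
    (x : ℝ) : 1 + a ^ 2 - 2 * a * cos x = a * (r + r⁻¹ - 2 * cos x) := by
  rcases ha with rfl | rfl
  · field_simp
    ring
  · field_simp

lemma norm_mul_prod_exp_mul_I_sub_sq {ι : Type*} [Fintype ι] {r : ℝ} (hr : r ≠ 0)
    {m : ι → ℝ} (hm : ∀ k, m k = r ∨ m k = r⁻¹) (c : ℂ) (φ : ι → ℝ) (t : ℝ) :
    ‖c * ∏ k, (Complex.exp (Complex.I * t) - m k * Complex.exp (Complex.I * φ k))‖ ^ 2
      = ‖c‖ ^ 2 * ((∏ k, m k) * ∏ k, (r + r⁻¹ - 2 * cos (t - φ k))) := by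
  rw [norm_mul, mul_pow, norm_prod, ← Finset.prod_pow, ← Finset.prod_mul_distrib]
  congr 1
  refine Finset.prod_congr rfl fun k _ => ?_
  rw [norm_exp_mul_I_sub_sq, one_add_sq_sub_two_mul_cos_of_eq_or_eq_inv hr (hm k)]

lemma sbmocz_angle_add_rev {K : ℕ} {ζ : ℝ} {φ : ℕ → ℝ}
    (hφ : ∀ k, φ k = (2 * π - ζ) * k / K + (2 * π + ζ * ((K : ℝ) - 1)) / (2 * K))
    (k : Fin K) : φ k + φ k.rev = 2 * π := by
  have hK : (K : ℝ) ≠ 0 := Nat.cast_ne_zero.mpr k.pos.ne'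
  have hrev : ((k.rev : ℕ) : ℝ) = K - 1 - k := by
    rw [Fin.val_rev, Nat.cast_sub (by omega), Nat.cast_add, Nat.cast_one]
    ring
  rw [hφ, hφ, hrev]
  field_simp
  ring

lemma prod_comp_cos_neg_sub_of_add_rev {K : ℕ} (g : ℝ → ℝ) {φ : Fin K → ℝ}
    (hφ : ∀ k, φ k + φ k.rev = 2 * π) (θ : ℝ) :
    ∏ k, g (cos (-θ - φ k)) = ∏ k, g (cos (θ - φ k)) := by
  refine Fintype.prod_equiv Fin.revPerm _ _ fun k => ?_
  have hangle : -θ - φ k = -(θ - φ k.rev + 2 * π) := by linarith [hφ k]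
  rw [Fin.revPerm_apply, hangle, cos_neg, cos_add_two_pi]

theorem sbmocz_abs_sq_symm_on_unit_circle_general
    (K : ℕ) (ζ : ℝ)
    (r : ℝ) (hr : 0 < r) (m : Fin K → ℝ) (hm : ∀ k, m k = r ∨ m k = r⁻¹)
    (c : ℂ)
    (φ : ℕ → ℝ)
    (hφ : ∀ k, φ k = (2 * π - ζ) * k / K + (2 * π + ζ * ((K : ℝ) - 1)) / (2 * K)) :
    ∀ θ : ℝ,
      ‖c * ∏ k : Fin K,
          (Complex.exp (-Complex.I * (θ : ℂ)) -
            (m k : ℂ) * Complex.exp (Complex.I * (φ k : ℂ)))‖ ^ 2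
        = ‖c * ∏ k : Fin K,
            (Complex.exp (Complex.I * (θ : ℂ)) -
              (m k : ℂ) * Complex.exp (Complex.I * (φ k : ℂ)))‖ ^ 2 := by
  intro θ
  have hneg : -Complex.I * (θ : ℂ) = Complex.I * ((-θ : ℝ) : ℂ) := by push_cast; ring
  rw [hneg, norm_mul_prod_exp_mul_I_sub_sq hr.ne' hm, norm_mul_prod_exp_mul_I_sub_sq hr.ne' hm,
    prod_comp_cos_neg_sub_of_add_rev (fun x => r + r⁻¹ - 2 * x) (sbmocz_angle_add_rev hφ)]

/-- Lemma 1: the squared magnitude of any SBMOCZ polynomial on the unit circle is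
symmetric, `|X(e^{-iθ})|² = |X(e^{iθ})|²`. -/
theorem sbmocz_abs_sq_symm_on_unit_circle
    (K : ℕ) (hK : 1 ≤ K) (ζ : ℝ) (hζ : 0 ≤ ζ ∧ ζ < 2 * π)
    (r : ℝ) (hr : 0 < r) (m : Fin K → ℝ) (hm : ∀ k, m k = r ∨ m k = r⁻¹)
    (c : ℂ) (hc : c ≠ 0)
    (φ : ℕ → ℝ)
    (hφ : ∀ k, φ k = (2 * π - ζ) * k / K + (2 * π + ζ * ((K : ℝ) - 1)) / (2 * K)) :
    ∀ θ : ℝ,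
      ‖c * ∏ k : Fin K,
          (Complex.exp (-Complex.I * (θ : ℂ)) -
            (m k : ℂ) * Complex.exp (Complex.I * (φ k : ℂ)))‖ ^ 2
        = ‖c * ∏ k : Fin K,
            (Complex.exp (Complex.I * (θ : ℂ)) -
              (m k : ℂ) * Complex.exp (Complex.I * (φ k : ℂ)))‖ ^ 2 :=
  sbmocz_abs_sq_symm_on_unit_circle_general K ζ r hr m hm c φ hφ
end
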